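/- arXiv:2511.03129 — 2 statements merged into one kernel-verified Lean document; each statement's English description precedes it below -/
import Mathlib

section
/- If every connected component of the graph contains at least one Dirichlet (boundary) vertex, then the interior principal submatrix L_ii of the weighted Laplacian L (obtained by restricting rows and columns to the non-Dirichlet vertices) is symmetric positive definite, hence invertible. -/
open Matrix

/-- If every connected component of the graph contains at least one Dirichlet
vertex, then the interior principal submatrix `L_ii` of the weighted Laplacian
`L = Bᵀ C B` (rows and columns restricted to the non-Dirichlet vertices) is
symmetric positive definite, hence invertible. -/
theorem interior_laplacian_posDef
    {E V : Type*} [Fintype E] [DecidableEq E] [Fintype V] [DecidableEq V]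
    (tail head : E → V) (c : E → ℝ) (hc : ∀ e, 0 < c e)
    (B : Matrix E V ℝ)
    (hB : ∀ e v, B e v = (if v = head e then (1 : ℝ) else 0) -
                          (if v = tail e then (1 : ℝ) else 0))
    (adj : V → V → Prop)
    (hadj : ∀ v w, adj v w ↔ ∃ e, (tail e = v ∧ head e = w) ∨ (tail e = w ∧ head e = v))
    (D : Set V) [DecidablePred (· ∈ D)]
    (hanchor : ∀ v : V, ∃ d ∈ D, Relation.EqvGen adj v d) :
    ((Bᵀ * Matrix.diagonal c * B).submatrix
        (fun i : {v : V // v ∉ D} => (i : V)) (fun j : {v : V // v ∉ D} => (j : V))).PosDef ∧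
    IsUnit ((Bᵀ * Matrix.diagonal c * B).submatrix
        (fun i : {v : V // v ∉ D} => (i : V)) (fun j : {v : V // v ∉ D} => (j : V))) := by
  have hherm : ((Bᵀ * Matrix.diagonal c * B).submatrix
      (fun i : {v : V // v ∉ D} => (i : V)) (fun j : {v : V // v ∉ D} => (j : V))).IsHermitian := by
    have h1 : (Bᵀ * Matrix.diagonal c * B).IsHermitian := by
      have : (Matrix.diagonal c).IsHermitian := by
        simp [Matrix.IsHermitian, Matrix.diagonal_conjTranspose]
      have h2 := Matrix.isHermitian_conjTranspose_mul_mul B this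
      simpa [Matrix.conjTranspose_eq_transpose_of_trivial] using h2
    exact h1.submatrix _
  have hpd : ((Bᵀ * Matrix.diagonal c * B).submatrix
      (fun i : {v : V // v ∉ D} => (i : V)) (fun j : {v : V // v ∉ D} => (j : V))).PosDef := by
    refine Matrix.PosDef.of_dotProduct_mulVec_pos hherm ?_
    intro x hx
    -- extend x by zero on D
    set y : V → ℝ := fun v => if h : v ∈ D then 0 else x ⟨v, h⟩ with hy
    have hyD : ∀ v ∈ D, y v = 0 := fun v hv => by simp [hy, hv]
    have hyx : ∀ i : {v : V // v ∉ D}, y i = x i := fun i => by simp [hy, i.2]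
    -- edge values
    have hBy : ∀ e, (B *ᵥ y) e = y (head e) - y (tail e) := by
      intro e
      simp only [Matrix.mulVec, dotProduct, hB, sub_mul, ite_mul, one_mul, zero_mul]
      rw [Finset.sum_sub_distrib]
      simp [Finset.sum_ite_eq']
    -- quadratic form
    have hquad : dotProduct (star x) (((Bᵀ * Matrix.diagonal c * B).submatrix
        (fun i : {v : V // v ∉ D} => (i : V)) (fun j : {v : V // v ∉ D} => (j : V))) *ᵥ x)
        = ∑ e, c e * (y (head e) - y (tail e))^2 := by
      have hMx : ∀ i : {v : V // v ∉ D},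
          (((Bᵀ * Matrix.diagonal c * B).submatrix
            (fun i : {v : V // v ∉ D} => (i : V)) (fun j : {v : V // v ∉ D} => (j : V))) *ᵥ x) i
          = ((Bᵀ * Matrix.diagonal c * B) *ᵥ y) i := by
        intro i
        simp only [Matrix.mulVec, dotProduct, Matrix.submatrix_apply]
        rw [← Fintype.sum_subtype_add_sum_subtype (· ∈ D) (fun v => (Bᵀ * Matrix.diagonal c * B) i v * y v)]
        have : ∀ v : {v : V // v ∈ D}, (Bᵀ * Matrix.diagonal c * B) (i : V) v * y v = 0 := by
          intro v; rw [hyD v v.2, mul_zero]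
        rw [Finset.sum_congr rfl (fun v _ => this v), Finset.sum_const_zero, zero_add]
        exact Finset.sum_congr rfl fun j _ => by rw [hyx j]
      have h1 : dotProduct (star x) (((Bᵀ * Matrix.diagonal c * B).submatrix
          (fun i : {v : V // v ∉ D} => (i : V)) (fun j : {v : V // v ∉ D} => (j : V))) *ᵥ x)
          = dotProduct y ((Bᵀ * Matrix.diagonal c * B) *ᵥ y) := by
        simp only [star_trivial, dotProduct]
        rw [← Fintype.sum_subtype_add_sum_subtype (· ∈ D) (fun v => y v * ((Bᵀ * Matrix.diagonal c * B) *ᵥ y) v)]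
        have : ∀ v : {v : V // v ∈ D}, y (v : V) * ((Bᵀ * Matrix.diagonal c * B) *ᵥ y) v = 0 := by
          intro v; rw [hyD v v.2, zero_mul]
        rw [Finset.sum_congr rfl (fun v _ => this v), Finset.sum_const_zero, zero_add]
        exact Finset.sum_congr rfl fun i _ => by rw [hyx i, hMx i]
      rw [h1]
      have h2 : dotProduct y ((Bᵀ * Matrix.diagonal c * B) *ᵥ y)
          = dotProduct (B *ᵥ y) (Matrix.diagonal c *ᵥ (B *ᵥ y)) := by
        rw [← Matrix.mulVec_mulVec, ← Matrix.mulVec_mulVec, Matrix.dotProduct_mulVec,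
          Matrix.vecMul_transpose]
      rw [h2]
      simp only [Matrix.mulVec_diagonal, dotProduct, hBy]
      exact Finset.sum_congr rfl fun e _ => by ring
    rw [hquad]
    have hnonneg : ∀ e ∈ Finset.univ, 0 ≤ c e * (y (head e) - y (tail e))^2 :=
      fun e _ => mul_nonneg (hc e).le (sq_nonneg _)
    rcases lt_or_eq_of_le (Finset.sum_nonneg hnonneg) with h | h
    · exact h
    · exfalso
      have hzero : ∀ e, y (head e) = y (tail e) := by
        intro e
        have := (Finset.sum_eq_zero_iff_of_nonneg hnonneg).mp h.symm e (Finset.mem_univ e)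
        have h2 : (y (head e) - y (tail e))^2 = 0 := by
          rcases mul_eq_zero.mp this with h' | h'
          · exact absurd h' (hc e).ne'
          · exact h'
        have := pow_eq_zero_iff (n := 2) (by norm_num) |>.mp h2
        linarith [sub_eq_zero.mp this]
      have hconst : ∀ v w, Relation.EqvGen adj v w → y v = y w := by
        intro v w h
        induction h with
        | rel a b hab =>
            obtain ⟨e, he⟩ := (hadj a b).mp hab
            rcases he with ⟨h1, h2⟩ | ⟨h1, h2⟩
            · rw [← h1, ← h2, hzero e]
            · rw [← h1, ← h2, (hzero e).symm]
        | refl => rfl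
        | symm _ _ _ ih => exact ih.symm
        | trans _ _ _ _ _ ih1 ih2 => exact ih1.trans ih2
      apply hx
      funext i
      obtain ⟨d, hd, hvd⟩ := hanchor i
      have : y i = 0 := (hconst _ _ hvd).trans (hyD d hd)
      rw [← hyx i, this]; rfl
  exact ⟨hpd, hpd.isUnit⟩
end

section
/- If some connected component of the graph contains no Dirichlet vertex, then the interior block L_ii of the weighted Laplacian is singular: the restriction of that component's indicator vector to the interior vertices is a nonzero element of ker(L_ii). -/
open Matrix
open Classical

/-- If some connected component of the graph contains no Dirichlet vertex, then
the interior block `L_ii` of the weighted Laplacian is singular: the restriction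
of that component's indicator vector to the interior vertices is a nonzero
element of `ker L_ii`. -/
theorem interior_laplacian_singular_of_unanchored_component
    {E V : Type*} [Fintype E] [Fintype V] [DecidableEq V]
    (tail head : E → V) (c : E → ℝ) (hc : ∀ e, 0 < c e)
    (B : Matrix E V ℝ)
    (hB : ∀ e v, B e v = (if v = head e then (1 : ℝ) else 0) -
                          (if v = tail e then (1 : ℝ) else 0))
    (adj : V → V → Prop)
    (hadj : ∀ v w, adj v w ↔ ∃ e, (tail e = v ∧ head e = w) ∨ (tail e = w ∧ head e = v))
    (D : Set V) [DecidablePred (· ∈ D)]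
    (v₀ : V) (hcomp : ∀ w : V, Relation.EqvGen adj w v₀ → w ∉ D) :
    (fun i : {v : V // v ∉ D} => if Relation.EqvGen adj (i : V) v₀ then (1 : ℝ) else 0) ≠ 0 ∧
    ((Bᵀ * Matrix.diagonal c * B).submatrix
        (fun i : {v : V // v ∉ D} => (i : V)) (fun j : {v : V // v ∉ D} => (j : V))) *ᵥ
      (fun i : {v : V // v ∉ D} => if Relation.EqvGen adj (i : V) v₀ then (1 : ℝ) else 0) = 0 := by
  set x : V → ℝ := fun v => if Relation.EqvGen adj v v₀ then (1 : ℝ) else 0 with hx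
  -- B *ᵥ x = 0
  have hrel : ∀ e, Relation.EqvGen adj (head e) v₀ ↔ Relation.EqvGen adj (tail e) v₀ := by
    intro e
    have ha : adj (tail e) (head e) := (hadj _ _).2 ⟨e, Or.inl ⟨rfl, rfl⟩⟩
    have h1 : Relation.EqvGen adj (tail e) (head e) := Relation.EqvGen.rel _ _ ha
    constructor
    · intro h; exact h1.trans _ _ _ h
    · intro h; exact (h1.symm _ _).trans _ _ _ h
  have hBx : B *ᵥ x = 0 := by
    funext e
    have : (B *ᵥ x) e = x (head e) - x (tail e) := by
      simp only [Matrix.mulVec, dotProduct, hB, sub_mul, one_mul, ite_mul, zero_mul,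
        Finset.sum_sub_distrib, Finset.sum_ite_eq', Finset.mem_univ, if_true]
    rw [this]
    simp only [hx]
    rw [if_congr (hrel e) rfl rfl]
    simp
  have hLx : (Bᵀ * Matrix.diagonal c * B) *ᵥ x = 0 := by
    rw [← Matrix.mulVec_mulVec, ← Matrix.mulVec_mulVec, hBx]
    simp
  have hv₀ : v₀ ∉ D := hcomp v₀ (Relation.EqvGen.refl v₀)
  constructor
  · intro h
    have := congrFun h ⟨v₀, hv₀⟩
    simp [Relation.EqvGen.refl] at this
  · funext i
    have hzero : ∀ j : V, j ∈ D → x j = 0 := by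
      intro j hj
      simp only [hx]
      rw [if_neg]
      intro h
      exact hcomp j h hj
    have key : ∑ j : {v : V // v ∉ D}, (Bᵀ * Matrix.diagonal c * B) (i : V) (j : V) * x j
        = ∑ j : V, (Bᵀ * Matrix.diagonal c * B) (i : V) j * x j := by
      set f : V → ℝ := fun j => (Bᵀ * Matrix.diagonal c * B) (i : V) j * x j with hf
      have h1 : ∑ j : {v : V // v ∉ D}, f (j : V)
          = ∑ j ∈ Finset.univ.filter (fun v => v ∉ D), f j :=
        (Finset.sum_subtype _ (by simp) f).symm
      have h2 : ∑ j ∈ Finset.univ.filter (fun v => ¬ v ∉ D), f j = 0 := by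
        apply Finset.sum_eq_zero
        intro j hj
        simp only [Finset.mem_filter, not_not] at hj
        simp [hf, hzero j hj.2]
      rw [h1, ← Finset.sum_filter_add_sum_filter_not Finset.univ (fun v => v ∉ D) f, h2,
        add_zero]
    have := congrFun hLx (i : V)
    simp only [Matrix.mulVec, dotProduct, Matrix.submatrix_apply, Pi.zero_apply] at this ⊢
    rw [key]
    exact this
end
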